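/- Let q be a prime power, m ≥ 1, and λ ≥ 2. Let C ⊆ F_{q^m}^n be a linear code and S ⊆ F_{q^m} an F_q-subspace of dimension λ with S² = F_{q^m}. Let B_S = (γ_0, …, γ_{λ-1}) be an F_q-basis of S; list the products γ_r γ_s (0 ≤ r ≤ s ≤ λ−1) in the order given by the index C(s+1,2)+r, let B_{S²} consist of the first m elements of this list, and assume B_{S²} is an F_q-basis of F_{q^m}. Let K(λ,m) = {C(λ+1,2)·i + j : 0 ≤ i ≤ n−1, m ≤ j ≤ C(λ+1,2)−1}. Then Short_{K(λ,m)}( (Exp_{B_S}(C|_S))^{~⋆2} ) ⊆ Exp_{B_{S²}}( (C|_S)^{⋆2}_{F_q} ). -/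
import Mathlib

open Module

/-- The subspace subcode of a code `C ⊆ F^n`, with respect to `K`-subspaces `S i ⊆ F`. -/
def subspaceSubcode {K F : Type*} [Field K] [Field F] [Algebra K F] {n : ℕ}
    (C : Submodule F (Fin n → F)) (S : Fin n → Submodule K F) :
    Submodule K (Fin n → F) :=
  C.restrictScalars K ⊓ Submodule.pi Set.univ S

/-- The square `S²` of a subspace `S ⊆ F`: the `K`-span of all products of two
elements of `S`. -/
def sqSubspace {K F : Type*} [Field K] [Field F] [Algebra K F] (S : Submodule K F) :
    Submodule K F :=
  Submodule.span K {x | ∃ a ∈ S, ∃ b ∈ S, x = a * b}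

/-- The index set of the blocks of a twisted product: pairs `(r, s)` with
`0 ≤ r ≤ s ≤ λ - 1`. -/
abbrev IdxPairs (lam : ℕ) := {p : Fin lam × Fin lam // p.1 ≤ p.2}

/-- The numeric index `C(s+1, 2) + r` of the pair `(r, s)` within a block of a twisted
product. -/
def pairIdx {lam : ℕ} (p : IdxPairs lam) : ℕ :=
  Nat.choose ((p.1.2 : ℕ) + 1) 2 + (p.1.1 : ℕ)

/-- The twisted product of two vectors of `F_q^{λn}` (entries grouped in blocks of
length `λ`): in block `i`, the entry of index `(r, s)` (i.e. `C(s+1,2) + r`) is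
`a_{i,r}b_{i,s} + a_{i,s}b_{i,r}` if `r < s` and `a_{i,r}b_{i,r}` if `r = s`. -/
def twStar {K : Type*} [CommRing K] {n lam : ℕ} (a b : Fin n × Fin lam → K) :
    Fin n × IdxPairs lam → K :=
  fun q =>
    if q.2.1.1 = q.2.1.2 then a (q.1, q.2.1.1) * b (q.1, q.2.1.1)
    else a (q.1, q.2.1.1) * b (q.1, q.2.1.2) + a (q.1, q.2.1.2) * b (q.1, q.2.1.1)

/-- The expansion `Exp_{B_S}(C|_S)` of the subspace subcode of `C` over the basis
`γ = (γ_0, …, γ_{λ-1})` of `S = span(range γ)`: the set of coordinate vectors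
(w.r.t. `γ`) of codewords of `C` with all entries in `S`. -/
def expSet (K : Type*) {F : Type*} [Field K] [Field F] [Algebra K F] {n lam : ℕ}
    (γ : Fin lam → F) (C : Submodule F (Fin n → F)) : Set (Fin n × Fin lam → K) :=
  {v | ∃ c, c ∈ C ∧ (∀ i, c i ∈ Submodule.span K (Set.range γ)) ∧
        ∀ i, c i = ∑ j, v (i, j) • γ j}

lemma pairIdx_aux {r s r' s' : ℕ} (h1 : r ≤ s) (h2 : r' ≤ s')
    (h : Nat.choose (s+1) 2 + r = Nat.choose (s'+1) 2 + r') : s = s' ∧ r = r' := by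
  have key : ∀ a b a' b' : ℕ, a ≤ b → a' ≤ b' → b < b' →
      Nat.choose (b+1) 2 + a < Nat.choose (b'+1) 2 + a' := by
    intro a b a' b' hab _ hbb
    calc Nat.choose (b+1) 2 + a ≤ Nat.choose (b+1) 2 + b := by omega
    _ < Nat.choose (b+2) 2 := by
        have : Nat.choose (b+2) 2 = Nat.choose (b+1) 1 + Nat.choose (b+1) 2 :=
          Nat.choose_succ_succ (b+1) 1
        simp [Nat.choose_one_right] at this
        omega
    _ ≤ Nat.choose (b'+1) 2 := Nat.choose_le_choose 2 (by omega)
    _ ≤ _ := Nat.le_add_right _ _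
  have hss : s = s' := by
    rcases lt_trichotomy s s' with h' | h' | h'
    · exact absurd h (Nat.ne_of_lt (key _ _ _ _ h1 h2 h'))
    · exact h'
    · exact absurd h.symm (Nat.ne_of_lt (key _ _ _ _ h2 h1 h'))
  subst hss
  omega

lemma pairIdx_injective {lam : ℕ} : Function.Injective (pairIdx (lam := lam)) := by
  rintro ⟨⟨r, s⟩, h1⟩ ⟨⟨r', s'⟩, h2⟩ h
  simp only [pairIdx] at h
  obtain ⟨hs, hr⟩ := pairIdx_aux (by exact_mod_cast h1) (by exact_mod_cast h2) h
  ext <;> simpa [Fin.ext_iff]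

lemma twSum {K F : Type*} [Field K] [Field F] [Algebra K F] {lam : ℕ}
    (γ : Fin lam → F) (v w : Fin lam → K) :
    ∑ p : {p : Fin lam × Fin lam // p.1 ≤ p.2},
      (if p.1.1 = p.1.2 then v p.1.1 * w p.1.1
        else v p.1.1 * w p.1.2 + v p.1.2 * w p.1.1) • (γ p.1.1 * γ p.1.2)
      = (∑ r, v r • γ r) * (∑ s, w s • γ s) := by
  classical
  set h : Fin lam × Fin lam → F := fun q => (v q.1 * w q.2) • (γ q.1 * γ q.2) with hh
  have hrhs : (∑ r, v r • γ r) * (∑ s, w s • γ s) = ∑ q : Fin lam × Fin lam, h q := by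
    rw [Finset.sum_mul_sum, ← Finset.sum_product']
    refine Finset.sum_congr rfl fun q _ => ?_
    simp only [hh]
    rw [smul_mul_smul_comm, mul_smul, smul_comm]
  rw [hrhs]
  have hsub : ∑ p : {p : Fin lam × Fin lam // p.1 ≤ p.2},
      (if p.1.1 = p.1.2 then v p.1.1 * w p.1.1
        else v p.1.1 * w p.1.2 + v p.1.2 * w p.1.1) • (γ p.1.1 * γ p.1.2)
      = ∑ q ∈ Finset.univ.filter (fun q : Fin lam × Fin lam => q.1 ≤ q.2),
        (if q.1 = q.2 then h q else h q + h q.swap) := by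
    refine Finset.sum_bij' (fun p _ => (p : Fin lam × Fin lam)) (fun q hq => ⟨q, by simpa using hq⟩)
      ?_ ?_ ?_ ?_ ?_
    · intro p _; simpa using p.2
    · intro q _; simp
    · intro p _; simp
    · intro q _; simp
    · intro p _
      by_cases hd : (p : Fin lam × Fin lam).1 = (p : Fin lam × Fin lam).2
      · simp [hh, hd]
      · simp only [hh, hd, if_false, add_smul, Prod.fst_swap, Prod.snd_swap]
        congr 1
        rw [mul_comm (γ _)]
  rw [hsub]
  rw [← Finset.sum_filter_add_sum_filter_not Finset.univ (fun q : Fin lam × Fin lam => q.1 ≤ q.2) h]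
  rw [← Finset.sum_filter_add_sum_filter_not
    (Finset.univ.filter (fun q : Fin lam × Fin lam => q.1 ≤ q.2))
    (fun q : Fin lam × Fin lam => q.1 = q.2)]
  rw [← Finset.sum_filter_add_sum_filter_not
    (Finset.univ.filter (fun q : Fin lam × Fin lam => q.1 ≤ q.2))
    (fun q : Fin lam × Fin lam => q.1 = q.2) h]
  have hnotle : ∑ q ∈ Finset.univ.filter (fun q : Fin lam × Fin lam => ¬ q.1 ≤ q.2), h q
      = ∑ q ∈ (Finset.univ.filter (fun q : Fin lam × Fin lam => q.1 ≤ q.2)).filter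
          (fun q => ¬ q.1 = q.2), h q.swap := by
    refine Finset.sum_nbij' (fun q => q.swap) (fun q => q.swap) ?_ ?_ ?_ ?_ ?_
    · intro q hq; simp at hq ⊢; exact ⟨hq.le, hq.ne⟩
    · intro q hq; simp at hq ⊢; exact lt_of_le_of_ne hq.1 hq.2
    · intro q _; simp
    · intro q _; simp
    · intro q _; rfl
  rw [hnotle]
  have hdiag : ∀ q ∈ (Finset.univ.filter (fun q : Fin lam × Fin lam => q.1 ≤ q.2)).filter
      (fun q : Fin lam × Fin lam => q.1 = q.2),
      (if q.1 = q.2 then h q else h q + h q.swap) = h q := by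
    intro q hq; simp at hq; simp [hq.2]
  have hoff : ∀ q ∈ (Finset.univ.filter (fun q : Fin lam × Fin lam => q.1 ≤ q.2)).filter
      (fun q : Fin lam × Fin lam => ¬ q.1 = q.2),
      (if q.1 = q.2 then h q else h q + h q.swap) = h q + h q.swap := by
    intro q hq; simp at hq; simp [hq.2]
  rw [Finset.sum_congr rfl hdiag, Finset.sum_congr rfl hoff, Finset.sum_add_distrib]
  ring

/-- `Short_{K(λ,m)}((Exp_{B_S}(C|_S))^{~⋆2}) ⊆ Exp_{B_{S²}}((C|_S)^{⋆2}_{F_q})`: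
every element `u` of the twisted square of `Exp_{B_S}(C|_S)` vanishing on the
coordinates of `K(λ,m)` (numeric index `≥ m` in each block) coincides, after deleting
those coordinates, with `Exp_{B_{S²}}(d)` for some `d ∈ (C|_S)^{⋆2}_{F_q}`. -/
theorem stmt_17 {K F : Type*} [Field K] [Fintype K] [Field F] [Algebra K F]
    {m lam n : ℕ} (hlam : 2 ≤ lam) (hm1 : 1 ≤ m)
    (γ : Fin lam → F) (hγ : LinearIndependent K γ)
    (hSsq : sqSubspace (Submodule.span K (Set.range γ)) = ⊤)
    (Bsq : Basis (Fin m) K F)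
    (hBsq : ∀ (p : IdxPairs lam) (h : pairIdx p < m),
      Bsq ⟨pairIdx p, h⟩ = γ p.1.1 * γ p.1.2)
    (C : Submodule F (Fin n → F)) :
    ∀ u ∈ Submodule.span K
        {u : Fin n × IdxPairs lam → K |
          ∃ v ∈ expSet K γ C, ∃ w ∈ expSet K γ C, u = twStar v w},
      (∀ (i : Fin n) (p : IdxPairs lam), m ≤ pairIdx p → u (i, p) = 0) →
      ∃ d ∈ Submodule.span K
          {d : Fin n → F |
            ∃ a ∈ subspaceSubcode C fun _ => Submodule.span K (Set.range γ),
              ∃ b ∈ subspaceSubcode C fun _ => Submodule.span K (Set.range γ),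
                d = fun i => a i * b i},
        ∀ (i : Fin n) (p : IdxPairs lam) (h : pairIdx p < m),
          u (i, p) = Bsq.repr (d i) ⟨pairIdx p, h⟩ := by
  classical
  intro u hu hvan
  -- the linear map Ψ
  set Ψ : (Fin n × IdxPairs lam → K) →ₗ[K] (Fin n → F) :=
    { toFun := fun u => fun i => ∑ p : IdxPairs lam, u (i, p) • (γ p.1.1 * γ p.1.2)
      map_add' := by
        intro x y; funext i
        simp [add_smul, Finset.sum_add_distrib]
      map_smul' := by
        intro c x; funext i
        simp [Finset.smul_sum, smul_smul] } with hΨ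
  refine ⟨Ψ u, ?_, ?_⟩
  · -- membership
    have hmap : Ψ u ∈ (Submodule.span K
        {u : Fin n × IdxPairs lam → K |
          ∃ v ∈ expSet K γ C, ∃ w ∈ expSet K γ C, u = twStar v w}).map Ψ :=
      Submodule.mem_map_of_mem hu
    rw [Submodule.map_span] at hmap
    refine Submodule.span_mono ?_ hmap
    rintro x ⟨y, ⟨v, ⟨a, haC, haS, hav⟩, w, ⟨b, hbC, hbS, hbw⟩, rfl⟩, rfl⟩
    refine ⟨a, ⟨haC, fun i _ => haS i⟩, b, ⟨hbC, fun i _ => hbS i⟩, ?_⟩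
    funext i
    have := twSum γ (fun r => v (i, r)) (fun s => w (i, s))
    rw [hav i, hbw i]
    simpa [hΨ, twStar] using this
  · -- the coordinate identity
    intro i p hp
    have hd : Ψ u i = ∑ p' : IdxPairs lam, u (i, p') • (γ p'.1.1 * γ p'.1.2) := rfl
    rw [hd, map_sum, Finsupp.finset_sum_apply]
    have hterm : ∀ p' : IdxPairs lam,
        (Bsq.repr (u (i, p') • (γ p'.1.1 * γ p'.1.2))) ⟨pairIdx p, hp⟩
        = u (i, p') * (Bsq.repr (γ p'.1.1 * γ p'.1.2)) ⟨pairIdx p, hp⟩ := by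
      intro p'; rw [map_smul]; simp [smul_eq_mul]
    rw [Finset.sum_congr rfl (fun p' _ => hterm p')]
    rw [Finset.sum_eq_single p]
    · rw [← hBsq p hp, Basis.repr_self]
      simp
    · intro p' _ hne
      by_cases h' : pairIdx p' < m
      · rw [← hBsq p' h', Basis.repr_self]
        have : (⟨pairIdx p', h'⟩ : Fin m) ≠ ⟨pairIdx p, hp⟩ := by
          simp only [ne_eq, Fin.mk.injEq]
          exact fun e => hne (pairIdx_injective e)
        rw [Finsupp.single_apply_eq_zero.mpr (fun e => absurd e.symm (by simpa using this))]
        ring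
      · rw [hvan i p' (le_of_not_gt h')]
        ring
    · intro h; exact absurd (Finset.mem_univ p) h
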